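/- Fix k ∈ ℝ³∖{0}, let A_{α,k}(x) be the vector potential operators and H^{ph}_k = ħ c |k| (a_H† a_H + a_V† a_V) the free photon Hamiltonian at wave vector k. Then for every α ∈ {1,2,3}, every x ∈ ℝ⁴, and every v in the span of the basis vectors |m,n⟩, Heisenberg's equation of motion holds: i ħ c ∂₀ (A_{α,k}(x) v) = [A_{α,k}(x), H^{ph}_k] v. -/

import Mathlib

/-- `k_μ x^μ = |k| x⁰ − k·𝐱` (massless dispersion relation). -/
noncomputable def minkDot0 (k : EuclideanSpace ℝ (Fin 3))
    (x : ℝ × EuclideanSpace ℝ (Fin 3)) : ℝ :=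
  ‖k‖ * x.1 - (inner ℝ k x.2 : ℝ)

/-- Normalization factor `N₀(k) = √((2π)³ · 2|k| · ℓ)`. -/
noncomputable def N₀ (ℓ : ℝ) (k : EuclideanSpace ℝ (Fin 3)) : ℝ :=
  Real.sqrt ((2 * Real.pi) ^ 3 * (2 * ‖k‖) * ℓ)

/-- Annihilation operator of the horizontal mode on the two-mode oscillator space. -/
noncomputable def aH (v : ℕ × ℕ → ℂ) : ℕ × ℕ → ℂ :=
  fun p => ((Real.sqrt ((p.1 : ℝ) + 1) : ℝ) : ℂ) * v (p.1 + 1, p.2)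

/-- Creation operator of the horizontal mode. -/
noncomputable def aHdag (v : ℕ × ℕ → ℂ) : ℕ × ℕ → ℂ :=
  fun p => if p.1 = 0 then 0 else ((Real.sqrt (p.1 : ℝ) : ℝ) : ℂ) * v (p.1 - 1, p.2)

/-- Annihilation operator of the vertical mode. -/
noncomputable def aV (v : ℕ × ℕ → ℂ) : ℕ × ℕ → ℂ :=
  fun p => ((Real.sqrt ((p.2 : ℝ) + 1) : ℝ) : ℂ) * v (p.1, p.2 + 1)

/-- Creation operator of the vertical mode. -/
noncomputable def aVdag (v : ℕ × ℕ → ℂ) : ℕ × ℕ → ℂ :=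
  fun p => if p.2 = 0 then 0 else ((Real.sqrt (p.2 : ℝ) : ℝ) : ℂ) * v (p.1, p.2 - 1)

/-- The vector potential operator `A_{α,k}(x)` applied to `v`. -/
noncomputable def Acomp (lam ℓ : ℝ) (k : EuclideanSpace ℝ (Fin 3))
    (εH εV : Fin 3 → ℝ) (α : Fin 3) (x : ℝ × EuclideanSpace ℝ (Fin 3))
    (v : ℕ × ℕ → ℂ) : ℕ × ℕ → ℂ :=
  fun p => ((lam / (2 * N₀ ℓ k) : ℝ) : ℂ) *
    (((εH α : ℝ) : ℂ) *
        (Complex.exp (-Complex.I * (minkDot0 k x)) * aH v p +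
          Complex.exp (Complex.I * (minkDot0 k x)) * aHdag v p) +
      ((εV α : ℝ) : ℂ) *
        (Complex.exp (-Complex.I * (minkDot0 k x)) * aV v p +
          Complex.exp (Complex.I * (minkDot0 k x)) * aVdag v p))

/-- The free photon Hamiltonian `H^{ph}_k = ħc|k|(a_H† a_H + a_V† a_V)` applied to `v`. -/
noncomputable def Hph (hbar c : ℝ) (k : EuclideanSpace ℝ (Fin 3))
    (v : ℕ × ℕ → ℂ) : ℕ × ℕ → ℂ :=
  fun p => ((hbar * c * ‖k‖ : ℝ) : ℂ) * (aHdag (aH v) p + aVdag (aV v) p)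

/-! Everything is a pointwise identity at each basis index `p = (m, n)`. The Hamiltonian acts
diagonally with eigenvalue `ħc|k|(m + n)`, so an annihilation operator lowers it and a creation
operator raises it by `ħc|k|`: the commutator `[A, H]` is `ħc|k|` times `A` with the sign of
its creation part flipped. Differentiating the phases `e^{∓i k_μ x^μ}` in `x⁰` produces the
same expression times `-i|k|`. -/

open Complex

section NumberOperators

variable (v : ℕ × ℕ → ℂ) (p : ℕ × ℕ)

lemma aHdag_aH_apply : aHdag (aH v) p = p.1 * v p := by
  obtain ⟨_ | m, n⟩ := p
  · simp [aHdag]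
  · simp only [aHdag, aH, Nat.succ_ne_zero, if_false, Nat.succ_sub_one]
    push_cast
    rw [← mul_assoc, ← ofReal_mul, Real.mul_self_sqrt (by positivity)]
    push_cast
    ring

lemma aVdag_aV_apply : aVdag (aV v) p = p.2 * v p := by
  obtain ⟨m, _ | n⟩ := p
  · simp [aVdag]
  · simp only [aVdag, aV, Nat.succ_ne_zero, if_false, Nat.succ_sub_one]
    push_cast
    rw [← mul_assoc, ← ofReal_mul, Real.mul_self_sqrt (by positivity)]
    push_cast
    ring

lemma Hph_apply (hbar c : ℝ) (k : EuclideanSpace ℝ (Fin 3)) :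
    Hph hbar c k v p = (hbar * c * ‖k‖ : ℝ) * (p.1 + p.2) * v p := by
  simp only [Hph, aHdag_aH_apply, aVdag_aV_apply]
  ring

variable (hbar c : ℝ) (k : EuclideanSpace ℝ (Fin 3))

lemma aH_Hph_apply :
    aH (Hph hbar c k v) p = (hbar * c * ‖k‖ : ℝ) * ((p.1 + 1) + p.2) * aH v p := by
  simp only [aH, Hph_apply]
  push_cast
  ring

lemma aV_Hph_apply :
    aV (Hph hbar c k v) p = (hbar * c * ‖k‖ : ℝ) * (p.1 + (p.2 + 1)) * aV v p := by
  simp only [aV, Hph_apply]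
  push_cast
  ring

lemma aHdag_Hph_apply :
    aHdag (Hph hbar c k v) p = (hbar * c * ‖k‖ : ℝ) * ((p.1 - 1) + p.2) * aHdag v p := by
  obtain ⟨_ | m, n⟩ := p
  · simp [aHdag]
  · simp only [aHdag, Nat.succ_ne_zero, if_false, Nat.succ_sub_one, Hph_apply]
    push_cast
    ring

lemma aVdag_Hph_apply :
    aVdag (Hph hbar c k v) p = (hbar * c * ‖k‖ : ℝ) * (p.1 + (p.2 - 1)) * aVdag v p := by
  obtain ⟨m, _ | n⟩ := p
  · simp [aVdag]
  · simp only [aVdag, Nat.succ_ne_zero, if_false, Nat.succ_sub_one, Hph_apply]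
    push_cast
    ring

end NumberOperators

noncomputable def planeWave (θ : ℝ) (a b : ℂ) : ℂ :=
  exp (-I * θ) * a + exp (I * θ) * b

lemma hasDerivAt_planeWave (θ : ℝ) (a b : ℂ) :
    HasDerivAt (fun θ => planeWave θ a b) (-I * planeWave θ a (-b)) θ := by
  unfold planeWave
  have hθ := (hasDerivAt_id θ).ofReal_comp
  refine ((((hθ.const_mul (-I)).cexp).mul_const a).add
    (((hθ.const_mul I).cexp).mul_const b)).congr_deriv ?_
  simp only [id, ofReal_one]
  ring

lemma fderiv_comp_minkDot0_apply_time {E : Type*} [NormedAddCommGroup E] [NormedSpace ℝ E]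
    (k : EuclideanSpace ℝ (Fin 3)) (x : ℝ × EuclideanSpace ℝ (Fin 3)) {F : ℝ → E} {F' : E}
    (hF : HasDerivAt F F' (minkDot0 k x)) :
    fderiv ℝ (fun y => F (minkDot0 k y)) x (1, 0) = ‖k‖ • F' := by
  have hmink : HasFDerivAt (minkDot0 k)
      (‖k‖ • ContinuousLinearMap.fst ℝ ℝ _ - (innerSL ℝ k).comp (ContinuousLinearMap.snd ℝ ℝ _)) x :=
    (hasFDerivAt_fst.const_mul ‖k‖).sub ((innerSL ℝ k).hasFDerivAt.comp x hasFDerivAt_snd)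
  have hcomp := (hF.hasFDerivAt.comp x hmink).fderiv
  rw [Function.comp_def] at hcomp
  rw [hcomp]
  simp

section VectorPotential

variable (lam ℓ : ℝ) (k : EuclideanSpace ℝ (Fin 3)) (εH εV : Fin 3 → ℝ) (α : Fin 3)
  (x : ℝ × EuclideanSpace ℝ (Fin 3)) (v : ℕ × ℕ → ℂ) (p : ℕ × ℕ)

lemma Acomp_apply : Acomp lam ℓ k εH εV α x v p = (lam / (2 * N₀ ℓ k) : ℝ) *
    (εH α * planeWave (minkDot0 k x) (aH v p) (aHdag v p) +
      εV α * planeWave (minkDot0 k x) (aV v p) (aVdag v p)) := rfl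

lemma fderiv_Acomp_time :
    fderiv ℝ (fun y => Acomp lam ℓ k εH εV α y v p) x (1, 0) =
      -I * ‖k‖ * ((lam / (2 * N₀ ℓ k) : ℝ) *
        (εH α * planeWave (minkDot0 k x) (aH v p) (-aHdag v p) +
          εV α * planeWave (minkDot0 k x) (aV v p) (-aVdag v p))) := by
  refine (fderiv_comp_minkDot0_apply_time k x
    ((((hasDerivAt_planeWave _ (aH v p) (aHdag v p)).const_mul (εH α : ℂ)).add
      ((hasDerivAt_planeWave _ (aV v p) (aVdag v p)).const_mul (εV α : ℂ))).const_mul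
        ((lam / (2 * N₀ ℓ k) : ℝ) : ℂ))).trans ?_
  rw [real_smul]
  ring

lemma Acomp_Hph_sub_Hph_Acomp (hbar c : ℝ) :
    Acomp lam ℓ k εH εV α x (Hph hbar c k v) p - Hph hbar c k (Acomp lam ℓ k εH εV α x v) p =
      (hbar * c * ‖k‖ : ℝ) * ((lam / (2 * N₀ ℓ k) : ℝ) *
        (εH α * planeWave (minkDot0 k x) (aH v p) (-aHdag v p) +
          εV α * planeWave (minkDot0 k x) (aV v p) (-aVdag v p))) := by
  rw [Hph_apply, Acomp_apply, Acomp_apply, aH_Hph_apply, aHdag_Hph_apply, aV_Hph_apply,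
    aVdag_Hph_apply]
  simp only [planeWave]
  ring

end VectorPotential

theorem stmt_13_general (hbar lam c ℓ : ℝ)
    (k : EuclideanSpace ℝ (Fin 3))
    (Ξ : Matrix (Fin 3) (Fin 3) ℝ) :
    ∀ v : ℕ × ℕ → ℂ,
      v ∈ Submodule.span ℂ (Set.range fun q : ℕ × ℕ => (Pi.single q 1 : ℕ × ℕ → ℂ)) →
      ∀ (α : Fin 3) (x : ℝ × EuclideanSpace ℝ (Fin 3)) (p : ℕ × ℕ),
        Complex.I * (hbar : ℂ) * (c : ℂ) *
            fderiv ℝ (fun y => Acomp lam ℓ k (Ξ 0) (Ξ 1) α y v p) x (1, 0)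
          = Acomp lam ℓ k (Ξ 0) (Ξ 1) α x (Hph hbar c k v) p
            - Hph hbar c k (Acomp lam ℓ k (Ξ 0) (Ξ 1) α x v) p := by
  intro v _ α x p
  rw [fderiv_Acomp_time, Acomp_Hph_sub_Hph_Acomp]
  rw [← mul_assoc]
  congr 1
  push_cast
  linear_combination (-(hbar * c * ‖k‖) : ℂ) * I_sq

/-- Heisenberg's equation of motion
`iħc ∂₀ (A_{α,k}(x) v) = [A_{α,k}(x), H^{ph}_k] v` on the span of the basis vectors. -/
theorem stmt_13 (hbar lam c ℓ : ℝ) (hhbar : 0 < hbar) (hlam : 0 < lam) (hc : 0 < c)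
    (hℓ : 0 < ℓ)
    (k : EuclideanSpace ℝ (Fin 3)) (hk : k ≠ 0)
    (Ξ : Matrix (Fin 3) (Fin 3) ℝ)
    (hΞorth : Ξ * Ξ.transpose = 1) (hΞdet : Ξ.det = 1)
    (hΞk : Ξ.mulVec (fun i => k i) = fun i => if i = 2 then ‖k‖ else 0) :
    ∀ v : ℕ × ℕ → ℂ,
      v ∈ Submodule.span ℂ (Set.range fun q : ℕ × ℕ => (Pi.single q 1 : ℕ × ℕ → ℂ)) →
      ∀ (α : Fin 3) (x : ℝ × EuclideanSpace ℝ (Fin 3)) (p : ℕ × ℕ),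
        Complex.I * (hbar : ℂ) * (c : ℂ) *
            fderiv ℝ (fun y => Acomp lam ℓ k (Ξ 0) (Ξ 1) α y v p) x (1, 0)
          = Acomp lam ℓ k (Ξ 0) (Ξ 1) α x (Hph hbar c k v) p
            - Hph hbar c k (Acomp lam ℓ k (Ξ 0) (Ξ 1) α x v) p :=
  stmt_13_general hbar lam c ℓ k Ξ
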